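/- For every n ≥ 4, the word Ev = x_1 x_2 ⋯ x_{n−2} x_n x_{n−1} · x_1 x_n · (x_2 x_1) · (x_3 x_2) ⋯ (x_{n−1} x_{n−2}) · x_n x_{n−1}, i.e., the permutation x_1 x_2 ⋯ x_{n−2} x_n x_{n−1}, followed by x_1 x_n, followed by the blocks x_j x_{j−1} for j = 2, 3, …, n−1 in increasing order of j, followed by x_n x_{n−1}, is a 3-uniform word that represents the cycle graph C_n with vertices x_1, …, x_n and edges x_j x_{j+1} for j = 1, …, n−1 together with the edge x_1 x_n. -/

import Mathlib

open SimpleGraph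

/-- Two distinct letters `x` and `y` alternate in the word `w` if, in the subsequence of `w`
consisting of all occurrences of `x` and `y`, no two consecutive letters are equal. -/
def Alternate {V : Type*} [DecidableEq V] (w : List V) (x y : V) : Prop :=
  (w.filter fun z => decide (z = x ∨ z = y)).Chain' (· ≠ ·)

/-- A word `w` represents the simple graph `G` if every vertex occurs in `w` and two distinct
vertices alternate in `w` iff they are adjacent in `G`. -/
def Represents {V : Type*} [DecidableEq V] (w : List V) (G : SimpleGraph V) : Prop :=
  (∀ v : V, v ∈ w) ∧ ∀ x y : V, x ≠ y → (Alternate w x y ↔ G.Adj x y)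

/-- A word is `k`-uniform if every letter of the alphabet occurs exactly `k` times in it. -/
def Uniform {V : Type*} [DecidableEq V] (k : ℕ) (w : List V) : Prop :=
  ∀ v : V, w.count v = k

/-!
Write the letter `x_{k+1}` as `k`. Then `Ev` is the word over `0, …, n-1` made of the permutation
`0 1 ⋯ (n-3) (n-1) (n-2)`, the pair `0 (n-1)`, and the blocks `(t+1) t` for `t = 0, …, n-2` (the
final `x_n x_{n-1}` is the last block). Every letter occurs once in the permutation and twice in the
rest. If `{a, b}` is not an edge of the cycle, one of `a, b`, say `c`, satisfies `1 ≤ c ≤ n-2`, and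
the consecutive blocks `c (c-1) (c+1) c` contain two occurrences of `c` with no letter of the pair
between them. For an edge, the restriction of the word to the pair is computed explicitly.
-/

section Alternation

variable {α β : Type*} [DecidableEq α] [DecidableEq β]

theorem alternate_iff_isChain (w : List α) (a b : α) :
    Alternate w a b ↔ (w.filter fun z => decide (z = a ∨ z = b)).IsChain (· ≠ ·) :=
  Iff.rfl

theorem alternate_comm (w : List α) (a b : α) : Alternate w a b ↔ Alternate w b a := by
  simp only [alternate_iff_isChain, or_comm]

theorem alternate_map_iff {f : α → β} (hf : Function.Injective f) (w : List α) (a b : α) :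
    Alternate (w.map f) (f a) (f b) ↔ Alternate w a b := by
  simp only [alternate_iff_isChain, List.filter_map, List.isChain_map, hf.ne_iff, hf.eq_iff,
    Function.comp_def]

theorem not_alternate_of_infix {w u : List α} {a b c : α} (h : c :: u ++ [c] <:+: w)
    (hc : c = a ∨ c = b) (hu : ∀ z ∈ u, z ≠ a ∧ z ≠ b) : ¬Alternate w a b := by
  have hfilter : (c :: u ++ [c]).filter (fun z => decide (z = a ∨ z = b)) = [c, c] := by
    simpa [List.filter_append, hc, List.filter_eq_nil_iff] using hu
  rw [alternate_iff_isChain]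
  intro hchain
  exact List.isChain_pair.mp (hchain.infix (hfilter ▸ h.filter _)) rfl

end Alternation

theorem filter_range_pair {a b : ℕ} (hab : a < b) (r : ℕ) :
    (List.range r).filter (fun z => decide (z = a ∨ z = b)) =
      (if a < r then [a] else []) ++ (if b < r then [b] else []) := by
  induction r with
  | zero => simp
  | succ r ih =>
    rw [List.range_succ, List.filter_append, ih]
    by_cases ha : a = r
    · subst ha; simp [hab.ne, show ¬ b < a + 1 by omega, show ¬ b < a by omega]
    by_cases hb : b = r
    · subst hb; simp [hab, Ne.symm hab.ne, hab.le]
    simp [Ne.symm ha, Ne.symm hb, Nat.le_iff_lt_or_eq, ha, hb]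

def evBlocks (m : ℕ) : List ℕ := (List.range m).flatMap fun t => [t + 1, t]

theorem evBlocks_succ (m : ℕ) : evBlocks (m + 1) = evBlocks m ++ [m + 1, m] := by
  simp [evBlocks, List.range_succ, List.flatMap_append]

theorem count_evBlocks (c m : ℕ) :
    (evBlocks m).count c = (if 0 < c ∧ c ≤ m then 1 else 0) + (if c < m then 1 else 0) := by
  induction m with
  | zero => simp [evBlocks]; omega
  | succ m ih =>
    rw [evBlocks_succ, List.count_append, ih]
    simp only [List.count_cons, List.count_nil, beq_iff_eq]
    split_ifs <;> omega

theorem filter_evBlocks_pair_succ (k m : ℕ) :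
    (evBlocks m).filter (fun z => decide (z = k ∨ z = k + 1)) =
      (if 0 < k ∧ k ≤ m then [k] else []) ++ (if k < m then [k + 1, k] else []) ++
        (if k + 1 < m then [k + 1] else []) := by
  induction m with
  | zero => simp [evBlocks]; omega
  | succ m ih =>
    rw [evBlocks_succ, List.filter_append, ih]
    simp only [List.filter_cons, List.filter_nil, decide_eq_true_eq]
    split_ifs <;> first | omega | simp <;> omega

theorem filter_evBlocks_pair_zero (c m : ℕ) (hc : 2 ≤ c) :
    (evBlocks m).filter (fun z => decide (z = 0 ∨ z = c)) =
      (if 0 < m then [0] else []) ++ (if c ≤ m then [c] else []) ++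
        (if c < m then [c] else []) := by
  induction m with
  | zero => simp [evBlocks]; omega
  | succ m ih =>
    rw [evBlocks_succ, List.filter_append, ih]
    simp only [List.filter_cons, List.filter_nil, decide_eq_true_eq, Nat.add_one_ne_zero, false_or]
    split_ifs <;> first | omega | simp <;> omega

theorem infix_evBlocks {t m : ℕ} (h : t + 1 < m) : [t + 1, t, t + 2, t + 1] <:+: evBlocks m := by
  obtain ⟨r, rfl⟩ : ∃ r, m = t + 2 + r := ⟨m - (t + 2), by omega⟩
  refine ⟨evBlocks t, (List.range r).flatMap fun s => [t + 2 + s + 1, t + 2 + s], ?_⟩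
  simp [evBlocks, List.range_add, List.range_succ, List.flatMap_append, List.flatMap_map]

def evPerm (n : ℕ) : List ℕ := List.range (n - 2) ++ [n - 1, n - 2]

def evWord (n : ℕ) : List ℕ := evPerm n ++ [0, n - 1] ++ evBlocks (n - 1)

theorem count_evPerm {n c : ℕ} (hn : 2 ≤ n) (hc : c < n) : (evPerm n).count c = 1 := by
  simp only [evPerm, List.count_append, List.count_range, List.count_cons, List.count_nil,
    beq_iff_eq]
  split_ifs <;> omega

theorem filter_evPerm {n a b : ℕ} (hab : a < b) (hb : b < n) :
    (evPerm n).filter (fun z => decide (z = a ∨ z = b)) = if a = n - 2 then [b, a] else [a, b] := by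
  rw [evPerm, List.filter_append, filter_range_pair hab]
  simp only [List.filter_cons, List.filter_nil, decide_eq_true_eq]
  split_ifs <;> simp <;> omega

theorem count_evWord {n c : ℕ} (hn : 2 ≤ n) (hc : c < n) : (evWord n).count c = 3 := by
  simp only [evWord, List.count_append, count_evPerm hn hc, count_evBlocks, List.count_cons,
    List.count_nil, beq_iff_eq]
  split_ifs <;> omega

theorem alternate_evWord_succ {n a : ℕ} (hn : 4 ≤ n) (ha : a + 1 < n) :
    Alternate (evWord n) a (a + 1) := by
  obtain ⟨m, rfl⟩ : ∃ m, n = m + 4 := ⟨n - 4, by omega⟩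
  rw [alternate_iff_isChain, evWord, List.filter_append, List.filter_append,
    filter_evPerm a.lt_add_one ha, filter_evBlocks_pair_succ]
  rcases Nat.eq_zero_or_pos a with rfl | ha0
  · simp
  rcases (show a = m + 2 ∨ a ≤ m + 1 by omega) with rfl | ham
  · simp
  · simp [ha0, ha0.ne, show a ≠ m + 2 by omega, show m + 3 ≠ a by omega,
      show m + 3 ≠ a + 1 by omega, show a ≤ m + 3 by omega, show a < m + 3 by omega,
      show a + 1 < m + 3 by omega]

theorem alternate_evWord_zero_last {n : ℕ} (hn : 4 ≤ n) : Alternate (evWord n) 0 (n - 1) := by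
  obtain ⟨m, rfl⟩ : ∃ m, n = m + 4 := ⟨n - 4, by omega⟩
  rw [alternate_iff_isChain, evWord, List.filter_append, List.filter_append,
    filter_evPerm (by omega) (by omega), filter_evBlocks_pair_zero _ _ (by omega)]
  simp

theorem not_alternate_evWord {n a b : ℕ} (hab : a + 1 < b) (hb : b < n)
    (hend : ¬(a = 0 ∧ b = n - 1)) : ¬Alternate (evWord n) a b := by
  obtain ⟨t, ht, htn⟩ : ∃ t, (t + 1 = a ∨ t + 1 = b) ∧ t + 2 < n := by
    rcases Nat.eq_zero_or_pos a with rfl | ha0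
    · exact ⟨b - 1, by omega, by omega⟩
    · exact ⟨a - 1, by omega, by omega⟩
  refine not_alternate_of_infix (u := [t, t + 2])
    ((infix_evBlocks (m := n - 1) (by omega)).trans (List.suffix_append _ _).isInfix) ht ?_
  simp only [List.mem_cons, List.not_mem_nil, or_false, forall_eq_or_imp, forall_eq]
  omega

theorem alternate_evWord_iff {n a b : ℕ} (hn : 4 ≤ n) (hab : a < b) (hb : b < n) :
    Alternate (evWord n) a b ↔ b = a + 1 ∨ (a = 0 ∧ b = n - 1) := by
  refine ⟨fun halt => ?_, ?_⟩
  · by_contra hedge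
    exact not_alternate_evWord (by omega) hb (by tauto) halt
  · rintro (rfl | ⟨rfl, rfl⟩)
    · exact alternate_evWord_succ hn hb
    · exact alternate_evWord_zero_last hn

theorem lt_of_mem_evWord {n c : ℕ} (hn : 1 ≤ n) (hc : c ∈ evWord n) : c < n := by
  simp only [evWord, evPerm, evBlocks, List.mem_append, List.mem_range, List.mem_cons,
    List.not_mem_nil, List.mem_flatMap, or_false] at hc
  rcases hc with hc | ⟨t, ht, hc⟩ <;> omega

theorem cycleGraph_adj_iff_of_lt {n : ℕ} {u v : Fin n} (huv : u < v) :
    (cycleGraph n).Adj u v ↔ (v : ℕ) = u + 1 ∨ ((u : ℕ) = 0 ∧ (v : ℕ) = n - 1) := by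
  have hv := v.isLt
  have huv' : (u : ℕ) < v := huv
  rw [cycleGraph_adj', Fin.val_sub, Fin.val_sub, Nat.mod_eq_of_lt (by omega),
    Nat.mod_eq_sub_mod (by omega), Nat.mod_eq_of_lt (by omega)]
  omega

theorem evWord_map_represents {n : ℕ} (hn : 4 ≤ n) {f : ℕ → Fin n} (hf : ∀ k < n, (f k : ℕ) = k) :
    Uniform 3 ((evWord n).map f) ∧ Represents ((evWord n).map f) (cycleGraph n) := by
  have hval : ((evWord n).map f).map Fin.val = evWord n := by
    rw [List.map_map]
    exact (List.map_congr_left fun c hc => hf c (lt_of_mem_evWord (by omega) hc)).trans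
      (List.map_id _)
  have hcount : ∀ v : Fin n, ((evWord n).map f).count v = 3 := fun v => by
    rw [← List.count_map_of_injective _ _ Fin.val_injective, hval, count_evWord (by omega) v.isLt]
  have halt : ∀ u v : Fin n, u < v → (Alternate ((evWord n).map f) u v ↔ (cycleGraph n).Adj u v) :=
    fun u v huv => by
      rw [← alternate_map_iff Fin.val_injective, hval, alternate_evWord_iff hn huv v.isLt,
        cycleGraph_adj_iff_of_lt huv]
  refine ⟨hcount, fun v => List.count_pos_iff.mp (by rw [hcount v]; omega), fun u v huv => ?_⟩
  rcases lt_or_gt_of_ne huv with h | h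
  · exact halt u v h
  · rw [alternate_comm, (cycleGraph n).adj_comm]
    exact halt v u h

theorem evWord_map_eq (n : ℕ) (hn : 2 ≤ n) (x : ℕ → Fin n) :
    (evWord n).map (fun k => x (k + 1)) =
      (((List.range (n - 2)).map fun t => x (t + 1)) ++ [x n, x (n - 1)]) ++
        [x 1, x n] ++
        ((List.range (n - 2)).flatMap fun t => [x (t + 2), x (t + 1)]) ++
        [x n, x (n - 1)] := by
  obtain ⟨m, rfl⟩ : ∃ m, n = m + 2 := ⟨n - 2, by omega⟩
  simp [evWord, evPerm, evBlocks, List.range_succ, List.map_flatMap]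

/-- For every `n ≥ 4`, the word
`Ev = x₁x₂⋯xₙ₋₂xₙxₙ₋₁ · x₁xₙ · (x₂x₁)(x₃x₂)⋯(xₙ₋₁xₙ₋₂) · xₙxₙ₋₁`
is a `3`-uniform word representing the cycle graph `Cₙ` with vertices `x₁, …, xₙ`
(where `x k` is the vertex of `Fin n` with value `k - 1`). -/
theorem word_Ev_represents_cycleGraph (n : ℕ) (hn : 4 ≤ n) (x : ℕ → Fin n)
    (hx : ∀ k, 1 ≤ k → k ≤ n → (x k : ℕ) = k - 1) :
    Uniform 3
      ((((List.range (n - 2)).map fun t => x (t + 1)) ++ [x n, x (n - 1)]) ++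
        [x 1, x n] ++
        ((List.range (n - 2)).flatMap fun t => [x (t + 2), x (t + 1)]) ++
        [x n, x (n - 1)]) ∧
    Represents
      ((((List.range (n - 2)).map fun t => x (t + 1)) ++ [x n, x (n - 1)]) ++
        [x 1, x n] ++
        ((List.range (n - 2)).flatMap fun t => [x (t + 2), x (t + 1)]) ++
        [x n, x (n - 1)])
      (cycleGraph n) := by
  rw [← evWord_map_eq n (by omega)]
  exact evWord_map_represents hn fun k hk => by simpa using hx (k + 1) (by omega) (by omega)
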